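/- Let γ be a real number with 3 < γ < 4. Then there exists a constant C > 0 such that for every integer q ≥ 2: q^{γ−2} · ∑_{s=1}^∞ ∑_{j : s·q/2 ≤ j < s·q} (s·q − j)^{−4} · j^{−(γ−1)} ≤ C / q. -/
import Mathlib


/-- The term `(sq − j)⁻⁴ j^{−(γ−1)}` of the double sum over `sq/2 ≤ j < sq`
(here `s ≥ 1` is encoded as `s + 1` with `s : ℕ`). -/
noncomputable def termIpp (γ : ℝ) (q s j : ℕ) : ℝ :=
  if (s + 1) * q ≤ 2 * j ∧ j < (s + 1) * q then
    ((((s + 1) * q : ℕ) : ℝ) - (j : ℝ)) ^ (-(4 : ℝ)) * (j : ℝ) ^ (-(γ - 1))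
  else 0

lemma termIpp_nonneg (γ : ℝ) (q s j : ℕ) : 0 ≤ termIpp γ q s j := by
  unfold termIpp
  split
  · next h =>
    have hj : (j : ℝ) ≤ (((s + 1) * q : ℕ) : ℝ) := by exact_mod_cast h.2.le
    exact mul_nonneg (Real.rpow_nonneg (by linarith) _)
      (Real.rpow_nonneg (Nat.cast_nonneg _) _)
  · exact le_refl 0

/-- Estimate of term I″: for `3 < γ < 4` there is `C > 0` such that for all `q ≥ 2`,
`q^{γ−2} ∑_{s≥1} ∑_{sq/2 ≤ j < sq} (sq−j)⁻⁴ j^{−(γ−1)} ≤ C / q`. -/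
theorem term_Ipp_estimate
    (γ : ℝ) (hγ1 : 3 < γ) (hγ2 : γ < 4) :
    ∃ C > 0, ∀ q : ℕ, 2 ≤ q →
      (∀ s : ℕ, Summable (fun j : ℕ => termIpp γ q s j)) ∧
      Summable (fun s : ℕ => ∑' j : ℕ, termIpp γ q s j) ∧
      (q : ℝ) ^ (γ - 2) * (∑' s : ℕ, ∑' j : ℕ, termIpp γ q s j) ≤ C / (q : ℝ) := by
  -- the auxiliary summable series
  have hA : Summable (fun k : ℕ => ((k : ℝ) + 1) ^ (-(4 : ℝ))) := by
    have := (summable_nat_add_iff 1).2 (Real.summable_nat_rpow.2 (by norm_num : (-(4:ℝ)) < -1))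
    simpa using this
  have hB : Summable (fun s : ℕ => ((s : ℝ) + 1) ^ (-(γ - 1))) := by
    have := (summable_nat_add_iff 1).2 (Real.summable_nat_rpow.2 (by linarith : -(γ - 1) < -1))
    simpa using this
  set A : ℝ := ∑' k : ℕ, ((k : ℝ) + 1) ^ (-(4 : ℝ)) with hAdef
  set B : ℝ := ∑' s : ℕ, ((s : ℝ) + 1) ^ (-(γ - 1)) with hBdef
  have hApos : 0 < A :=
    Summable.tsum_pos hA (fun k => Real.rpow_nonneg (by positivity) _) 0 (by norm_num)
  have hBpos : 0 < B :=
    Summable.tsum_pos hB (fun s => Real.rpow_nonneg (by positivity) _) 0 (by norm_num)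
  refine ⟨2 ^ (γ - 1) * A * B, by positivity, fun q hq => ?_⟩
  have hq0 : (0 : ℝ) < (q : ℝ) := by exact_mod_cast (by omega : 0 < q)
  -- inner summability
  have hsum : ∀ s : ℕ, Summable (fun j : ℕ => termIpp γ q s j) := by
    intro s
    apply summable_of_ne_finset_zero (s := Finset.range ((s + 1) * q))
    intro j hj
    rw [Finset.mem_range, not_lt] at hj
    have hcond : ¬((s + 1) * q ≤ 2 * j ∧ j < (s + 1) * q) := by omega
    simp only [termIpp, if_neg hcond]
  -- the key pointwise bound for the inner sums
  have key : ∀ s : ℕ, ∑' j : ℕ, termIpp γ q s j ≤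
      (2 ^ (γ - 1) * A * (q : ℝ) ^ (-(γ - 1))) * ((s : ℝ) + 1) ^ (-(γ - 1)) := by
    intro s
    set n : ℕ := (s + 1) * q with hn
    have hn0 : 0 < n := by positivity
    have hnR : (0 : ℝ) < (n : ℝ) := by exact_mod_cast hn0
    have hhpos : (0 : ℝ) < (n : ℝ) / 2 := by linarith
    have h1 : ∑' j : ℕ, termIpp γ q s j = ∑ j ∈ Finset.range n, termIpp γ q s j := by
      apply tsum_eq_sum
      intro j hj
      rw [Finset.mem_range, not_lt] at hj
      have hcond : ¬((s + 1) * q ≤ 2 * j ∧ j < (s + 1) * q) := by omega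
      simp only [termIpp, if_neg hcond]
    have h2 : ∀ j ∈ Finset.range n,
        termIpp γ q s j ≤ ((n : ℝ) / 2) ^ (-(γ - 1)) * (((n : ℝ) - j) ^ (-(4 : ℝ))) := by
      intro j hj
      rw [Finset.mem_range] at hj
      have hjn : (j : ℝ) < (n : ℝ) := by exact_mod_cast hj
      unfold termIpp
      split
      · next h =>
        have hhalf : (n : ℝ) / 2 ≤ (j : ℝ) := by
          have : (n : ℝ) ≤ 2 * (j : ℝ) := by exact_mod_cast h.1
          linarith
        have hbound : (j : ℝ) ^ (-(γ - 1)) ≤ ((n : ℝ) / 2) ^ (-(γ - 1)) :=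
          Real.rpow_le_rpow_of_nonpos hhpos hhalf (by linarith)
        rw [mul_comm (((n : ℝ) / 2) ^ (-(γ - 1)))]
        exact mul_le_mul_of_nonneg_left hbound (Real.rpow_nonneg (by linarith) _)
      · exact mul_nonneg (Real.rpow_nonneg hhpos.le _) (Real.rpow_nonneg (by linarith) _)
    -- reflect the sum of (n-j)^{-4}
    have hreflect : ∑ j ∈ Finset.range n, ((n : ℝ) - j) ^ (-(4 : ℝ))
        = ∑ j ∈ Finset.range n, ((j : ℝ) + 1) ^ (-(4 : ℝ)) := by
      rw [← Finset.sum_range_reflect (fun j => ((j : ℝ) + 1) ^ (-(4 : ℝ))) n]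
      apply Finset.sum_congr rfl
      intro j hj
      rw [Finset.mem_range] at hj
      have hcast : ((n - 1 - j : ℕ) : ℝ) + 1 = (n : ℝ) - j := by
        have h1 : n - 1 - j = n - (j + 1) := by omega
        rw [h1, Nat.cast_sub (by omega)]
        push_cast; ring
      rw [hcast]
    have h3 : ∑ j ∈ Finset.range n, ((j : ℝ) + 1) ^ (-(4 : ℝ)) ≤ A :=
      Summable.sum_le_tsum (Finset.range n) (fun k _ => Real.rpow_nonneg (by positivity) _) hA
    -- split the prefactor
    have h4 : ((n : ℝ) / 2) ^ (-(γ - 1))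
        = 2 ^ (γ - 1) * ((q : ℝ) ^ (-(γ - 1)) * ((s : ℝ) + 1) ^ (-(γ - 1))) := by
      rw [Real.div_rpow hnR.le (by norm_num : (0:ℝ) ≤ 2)]
      have hnval : (n : ℝ) = ((s : ℝ) + 1) * (q : ℝ) := by
        rw [hn]; push_cast; ring
      rw [hnval, Real.mul_rpow (by positivity) hq0.le,
        Real.rpow_neg (by norm_num : (0:ℝ) ≤ 2), div_eq_mul_inv, inv_inv]
      ring
    calc ∑' j : ℕ, termIpp γ q s j
        ≤ ∑ j ∈ Finset.range n, ((n : ℝ) / 2) ^ (-(γ - 1)) * (((n : ℝ) - j) ^ (-(4 : ℝ))) := by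
          rw [h1]; exact Finset.sum_le_sum h2
      _ = ((n : ℝ) / 2) ^ (-(γ - 1)) * ∑ j ∈ Finset.range n, ((n : ℝ) - j) ^ (-(4 : ℝ)) := by
          rw [Finset.mul_sum]
      _ ≤ ((n : ℝ) / 2) ^ (-(γ - 1)) * A := by
          rw [hreflect] at *
          exact mul_le_mul_of_nonneg_left h3 (Real.rpow_nonneg hhpos.le _)
      _ = (2 ^ (γ - 1) * A * (q : ℝ) ^ (-(γ - 1))) * ((s : ℝ) + 1) ^ (-(γ - 1)) := by
          rw [h4]; ring
  -- summability of the outer series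
  have houter : Summable (fun s : ℕ => ∑' j : ℕ, termIpp γ q s j) := by
    apply Summable.of_nonneg_of_le (fun s => tsum_nonneg (fun j => termIpp_nonneg γ q s j)) key
    exact hB.mul_left _
  refine ⟨hsum, houter, ?_⟩
  have htot : ∑' s : ℕ, ∑' j : ℕ, termIpp γ q s j
      ≤ (2 ^ (γ - 1) * A * (q : ℝ) ^ (-(γ - 1))) * B := by
    calc ∑' s : ℕ, ∑' j : ℕ, termIpp γ q s j
        ≤ ∑' s : ℕ, (2 ^ (γ - 1) * A * (q : ℝ) ^ (-(γ - 1))) * ((s : ℝ) + 1) ^ (-(γ - 1)) :=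
          Summable.tsum_le_tsum key houter (hB.mul_left _)
      _ = (2 ^ (γ - 1) * A * (q : ℝ) ^ (-(γ - 1))) * B := tsum_mul_left
  have hexp : (q : ℝ) ^ (γ - 2) * (q : ℝ) ^ (-(γ - 1)) = ((q : ℝ))⁻¹ := by
    rw [← Real.rpow_add hq0, show γ - 2 + -(γ - 1) = -1 by ring, Real.rpow_neg_one]
  calc (q : ℝ) ^ (γ - 2) * (∑' s : ℕ, ∑' j : ℕ, termIpp γ q s j)
      ≤ (q : ℝ) ^ (γ - 2) * ((2 ^ (γ - 1) * A * (q : ℝ) ^ (-(γ - 1))) * B) :=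
        mul_le_mul_of_nonneg_left htot (Real.rpow_nonneg hq0.le _)
    _ = (2 ^ (γ - 1) * A * B) * ((q : ℝ) ^ (γ - 2) * (q : ℝ) ^ (-(γ - 1))) := by ring
    _ = (2 ^ (γ - 1) * A * B) / (q : ℝ) := by rw [hexp, div_eq_mul_inv]
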